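/- Let U ⊆ ℝ² be open and let ρ¹, ρ², u : U → ℝ be differentiable with ρ¹ > 0 and ρ¹ + ρ² > 0 on U. Suppose that on U the isothermal no-slip drift flux equations hold: ρ¹_t + u ρ¹_x + u_x ρ¹ = 0, ρ²_t + u ρ²_x + u_x ρ² = 0, and (ρ¹+ρ²)(u_t + u u_x) + (ρ¹_x + ρ²_x) = 0. Then the Riemann invariants r¹ := (u + ln(ρ¹+ρ²))/2, r² := (u − ln(ρ¹+ρ²))/2, r³ := ρ²/ρ¹ satisfy on U: r¹_t + (r¹+r²+1) r¹_x = 0, r²_t + (r¹+r²−1) r²_x = 0, and r³_t + (r¹+r²) r³_x = 0. -/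

import Mathlib

/-!
Write `ρ = ρ¹ + ρ²`. Adding the two mass equations gives the continuity equation for `ρ`;
dividing it by `ρ` gives `(log ρ)_t + u (log ρ)_x + u_x = 0`, and dividing the momentum
equation by `ρ` gives `u_t + u u_x + (log ρ)_x = 0`. Half the sum and half the difference of
these two are the transport equations of `r¹ = (u + log ρ)/2` and `r² = (u - log ρ)/2` with
speeds `u ± 1`, and `u = r¹ + r²`. Finally, the ratio of two solutions of the same continuity
equation is transported with speed `u`.
-/

noncomputable section

/-- Partial derivative with respect to the first ("time") variable. -/
def pt (f : ℝ × ℝ → ℝ) (p : ℝ × ℝ) : ℝ := fderiv ℝ f p (1, 0)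

/-- Partial derivative with respect to the second ("space") variable. -/
def px (f : ℝ × ℝ → ℝ) (p : ℝ × ℝ) : ℝ := fderiv ℝ f p (0, 1)

open Real

section Calculus

variable {E : Type*} [NormedAddCommGroup E] [NormedSpace ℝ E] {f g : E → ℝ} {p : E}

theorem fderiv_log_apply (hf : DifferentiableAt ℝ f p) (hp : f p ≠ 0) (v : E) :
    fderiv ℝ (fun q => log (f q)) p v = fderiv ℝ f p v / f p := by
  rw [fderiv.log hf hp, smul_apply, smul_eq_mul, inv_mul_eq_div]

theorem fderiv_div_apply (hf : DifferentiableAt ℝ f p) (hg : DifferentiableAt ℝ g p)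
    (hp : g p ≠ 0) (v : E) :
    fderiv ℝ (fun q => f q / g q) p v =
      (fderiv ℝ f p v * g p - f p * fderiv ℝ g p v) / g p ^ 2 := by
  have hinv := (hasDerivAt_inv hp).comp_hasFDerivAt p hg.hasFDerivAt
  simp only [div_eq_mul_inv (f _)]
  rw [(hf.hasFDerivAt.fun_mul hinv : HasFDerivAt (fun q => f q * (g q)⁻¹) _ p).fderiv]
  simp only [add_apply, smul_apply, smul_eq_mul]
  field_simp
  ring

end Calculus

def ContinuityEqAt (u ρ : ℝ × ℝ → ℝ) (p : ℝ × ℝ) : Prop :=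
  pt ρ p + u p * px ρ p + px u p * ρ p = 0

def MomentumEqAt (u ρ : ℝ × ℝ → ℝ) (p : ℝ × ℝ) : Prop :=
  ρ p * (pt u p + u p * px u p) + px ρ p = 0

def TransportEqAt (c : ℝ) (r : ℝ × ℝ → ℝ) (p : ℝ × ℝ) : Prop :=
  pt r p + c * px r p = 0

section DriftFlux

variable {u f g ρ L : ℝ × ℝ → ℝ} {p : ℝ × ℝ}

theorem pt_add (hf : DifferentiableAt ℝ f p) (hg : DifferentiableAt ℝ g p) :
    pt (fun q => f q + g q) p = pt f p + pt g p := by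
  rw [pt, fderiv_fun_add hf hg, add_apply, pt, pt]

theorem px_add (hf : DifferentiableAt ℝ f p) (hg : DifferentiableAt ℝ g p) :
    px (fun q => f q + g q) p = px f p + px g p := by
  rw [px, fderiv_fun_add hf hg, add_apply, px, px]

theorem ContinuityEqAt.add (hf : DifferentiableAt ℝ f p) (hg : DifferentiableAt ℝ g p)
    (hcf : ContinuityEqAt u f p) (hcg : ContinuityEqAt u g p) :
    ContinuityEqAt u (fun q => f q + g q) p := by
  unfold ContinuityEqAt at *
  rw [pt_add hf hg, px_add hf hg]
  linear_combination hcf + hcg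

theorem ContinuityEqAt.log (hρ : DifferentiableAt ℝ ρ p) (hp : ρ p ≠ 0)
    (h : ContinuityEqAt u ρ p) :
    pt (fun q => log (ρ q)) p + u p * px (fun q => log (ρ q)) p + px u p = 0 := by
  unfold ContinuityEqAt pt px at *
  rw [fderiv_log_apply hρ hp, fderiv_log_apply hρ hp]
  field_simp
  linear_combination h

theorem MomentumEqAt.log (hρ : DifferentiableAt ℝ ρ p) (hp : ρ p ≠ 0)
    (h : MomentumEqAt u ρ p) :
    pt u p + u p * px u p + px (fun q => log (ρ q)) p = 0 := by
  unfold MomentumEqAt pt px at *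
  rw [fderiv_log_apply hρ hp]
  field_simp
  linear_combination h

theorem ContinuityEqAt.transportEqAt_div (hf : DifferentiableAt ℝ f p)
    (hg : DifferentiableAt ℝ g p) (hp : g p ≠ 0)
    (hcf : ContinuityEqAt u f p) (hcg : ContinuityEqAt u g p) :
    TransportEqAt (u p) (fun q => f q / g q) p := by
  unfold ContinuityEqAt TransportEqAt pt px at *
  rw [fderiv_div_apply hf hg hp, fderiv_div_apply hf hg hp]
  field_simp
  linear_combination g p * hcf - f p * hcg

theorem transportEqAt_half_add (hu : DifferentiableAt ℝ u p) (hL : DifferentiableAt ℝ L p)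
    (hmom : pt u p + u p * px u p + px L p = 0) (hmass : pt L p + u p * px L p + px u p = 0) :
    TransportEqAt (u p + 1) (fun q => (u q + L q) / 2) p := by
  unfold TransportEqAt pt px at *
  simp only [div_eq_mul_inv _ (2 : ℝ), fderiv_mul_const (hu.fun_add hL), fderiv_fun_add hu hL,
    smul_apply, add_apply, smul_eq_mul]
  linear_combination (hmom + hmass) / 2

theorem transportEqAt_half_sub (hu : DifferentiableAt ℝ u p) (hL : DifferentiableAt ℝ L p)
    (hmom : pt u p + u p * px u p + px L p = 0) (hmass : pt L p + u p * px L p + px u p = 0) :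
    TransportEqAt (u p - 1) (fun q => (u q - L q) / 2) p := by
  unfold TransportEqAt pt px at *
  simp only [div_eq_mul_inv _ (2 : ℝ), fderiv_mul_const (hu.fun_sub hL), fderiv_fun_sub hu hL,
    smul_apply, sub_apply, smul_eq_mul]
  linear_combination (hmom - hmass) / 2

end DriftFlux

theorem riemann_invariants_solve_diagonalized_system
    (U : Set (ℝ × ℝ))
    (ρ₁ ρ₂ u : ℝ × ℝ → ℝ)
    (hρ₁ : ∀ p ∈ U, DifferentiableAt ℝ ρ₁ p)
    (hρ₂ : ∀ p ∈ U, DifferentiableAt ℝ ρ₂ p)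
    (hu : ∀ p ∈ U, DifferentiableAt ℝ u p)
    (hpos₁ : ∀ p ∈ U, 0 < ρ₁ p)
    (hpos : ∀ p ∈ U, 0 < ρ₁ p + ρ₂ p)
    (heq₁ : ∀ p ∈ U, pt ρ₁ p + u p * px ρ₁ p + px u p * ρ₁ p = 0)
    (heq₂ : ∀ p ∈ U, pt ρ₂ p + u p * px ρ₂ p + px u p * ρ₂ p = 0)
    (heq₃ : ∀ p ∈ U,
      (ρ₁ p + ρ₂ p) * (pt u p + u p * px u p) + (px ρ₁ p + px ρ₂ p) = 0) :
    let r₁ : ℝ × ℝ → ℝ := fun p => (u p + Real.log (ρ₁ p + ρ₂ p)) / 2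
    let r₂ : ℝ × ℝ → ℝ := fun p => (u p - Real.log (ρ₁ p + ρ₂ p)) / 2
    let r₃ : ℝ × ℝ → ℝ := fun p => ρ₂ p / ρ₁ p
    ∀ p ∈ U,
      pt r₁ p + (r₁ p + r₂ p + 1) * px r₁ p = 0 ∧
      pt r₂ p + (r₁ p + r₂ p - 1) * px r₂ p = 0 ∧
      pt r₃ p + (r₁ p + r₂ p) * px r₃ p = 0 := by
  intro r₁ r₂ r₃ p hp
  have hρ : DifferentiableAt ℝ (fun q => ρ₁ q + ρ₂ q) p := (hρ₁ p hp).fun_add (hρ₂ p hp)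
  have hρ_ne : ρ₁ p + ρ₂ p ≠ 0 := (hpos p hp).ne'
  have hmass : ContinuityEqAt u (fun q => ρ₁ q + ρ₂ q) p :=
    ContinuityEqAt.add (hρ₁ p hp) (hρ₂ p hp) (heq₁ p hp) (heq₂ p hp)
  have hmom : MomentumEqAt u (fun q => ρ₁ q + ρ₂ q) p := by
    rw [MomentumEqAt, px_add (hρ₁ p hp) (hρ₂ p hp)]
    exact heq₃ p hp
  have hL := hρ.log hρ_ne
  have hmassL := hmass.log hρ hρ_ne
  have hmomL := hmom.log hρ hρ_ne
  have hsum : r₁ p + r₂ p = u p := by ring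
  rw [hsum]
  exact ⟨transportEqAt_half_add (hu p hp) hL hmomL hmassL,
    transportEqAt_half_sub (hu p hp) hL hmomL hmassL,
    ContinuityEqAt.transportEqAt_div (hρ₂ p hp) (hρ₁ p hp) (hpos₁ p hp).ne'
      (heq₂ p hp) (heq₁ p hp)⟩

end
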